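/- Fix d ≥ 2, n ≥ 1 and δ ∈ [0,1]. For every unit vector ψ ∈ ℂ^d, with ρ_ψ := (1−δ)|ψ⟩⟨ψ| + (δ/d)·I_d and Λ := Diag(λ₀, δ/d, …, δ/d) where λ₀ := 1 − (d−1)δ/d, one has ⟨ψ| tr_{2…n}[Π_n ρ_ψ^{⊗n} Π_n] |ψ⟩ = ⟨e₀| tr_{2…n}[Π_n Λ^{⊗n} Π_n] |e₀⟩; i.e., the fidelity achieved by the symmetric-projection protocol under depolarizing noise is the same for every input pure state. -/

import Mathlib

open Matrix

/-- Permutation matrix on `(ℂ^d)^{⊗n}` permuting tensor factors. -/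
noncomputable def permMat (n d : ℕ) (σ : Equiv.Perm (Fin n)) :
    Matrix (Fin n → Fin d) (Fin n → Fin d) ℂ :=
  Matrix.of fun v w => if v = w ∘ σ then 1 else 0

/-- Projector onto the symmetric subspace of `(ℂ^d)^{⊗n}`. -/
noncomputable def symProj (n d : ℕ) :
    Matrix (Fin n → Fin d) (Fin n → Fin d) ℂ :=
  ((n.factorial : ℂ)⁻¹) • ∑ σ : Equiv.Perm (Fin n), permMat n d σ

/-- `n`-fold tensor (Kronecker) power of a `d×d` matrix. -/
noncomputable def tpow {d : ℕ} (A : Matrix (Fin d) (Fin d) ℂ) (n : ℕ) :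
    Matrix (Fin n → Fin d) (Fin n → Fin d) ℂ :=
  Matrix.of fun v w => ∏ i, A (v i) (w i)

/-- Partial trace over all tensor factors except the first. -/
noncomputable def ptrRest {n d : ℕ}
    (M : Matrix (Fin (n + 1) → Fin d) (Fin (n + 1) → Fin d) ℂ) :
    Matrix (Fin d) (Fin d) ℂ :=
  Matrix.of fun i j => ∑ t : Fin n → Fin d, M (Fin.cons i t) (Fin.cons j t)

/-!
Choose a unitary `U` with `U e₀ = ψ`; then `ρ_ψ = U Λ U†`. The tensor power `U^{⊗n}` commutes
with every permutation of the factors, hence with `Π_n`, and the partial trace is covariant,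
`tr_{2…n}[U^{⊗n} M U^{†⊗n}] = U tr_{2…n}[M] U†`, because on each block of `M` with respect to the
first factor the remaining `U^{⊗(n-1)}` and its adjoint cancel under the trace. Hence the left
side is `⟨ψ| U X U† |ψ⟩ = ⟨e₀| X |e₀⟩` with `X = tr_{2…n}[Π_n Λ^{⊗n} Π_n]`.
-/

section TensorPower

variable {d : ℕ}

lemma tpow_mul (A B : Matrix (Fin d) (Fin d) ℂ) (n : ℕ) :
    tpow (A * B) n = tpow A n * tpow B n := by
  ext v w
  simp only [tpow, mul_apply, of_apply, Finset.prod_univ_sum, Fintype.piFinset_univ,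
    Finset.prod_mul_distrib]

lemma tpow_one (n : ℕ) : tpow (1 : Matrix (Fin d) (Fin d) ℂ) n = 1 := by
  ext v w
  simp [tpow, one_apply, Finset.prod_boole, funext_iff]

lemma permMat_mul_apply {n : ℕ} (σ : Equiv.Perm (Fin n))
    (M : Matrix (Fin n → Fin d) (Fin n → Fin d) ℂ) (v w : Fin n → Fin d) :
    (permMat n d σ * M) v w = M (v ∘ σ.symm) w := by
  have hv : ∀ u : Fin n → Fin d, v = u ∘ σ ↔ u = v ∘ σ.symm := fun u => by
    constructor <;> rintro rfl <;> ext <;> simp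
  simp [mul_apply, permMat, hv]

lemma mul_permMat_apply {n : ℕ} (σ : Equiv.Perm (Fin n))
    (M : Matrix (Fin n → Fin d) (Fin n → Fin d) ℂ) (v w : Fin n → Fin d) :
    (M * permMat n d σ) v w = M v (w ∘ σ) := by
  simp [mul_apply, permMat]

lemma commute_permMat_tpow (n : ℕ) (σ : Equiv.Perm (Fin n)) (A : Matrix (Fin d) (Fin d) ℂ) :
    Commute (permMat n d σ) (tpow A n) := by
  ext v w
  rw [permMat_mul_apply, mul_permMat_apply]
  simp only [tpow, of_apply, Function.comp_apply]
  exact (Equiv.prod_comp σ fun i => A (v (σ.symm i)) (w i)).symm.trans (by simp)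

lemma commute_symProj_tpow (n : ℕ) (A : Matrix (Fin d) (Fin d) ℂ) :
    Commute (symProj n d) (tpow A n) :=
  (Commute.sum_left _ _ _ fun σ _ => commute_permMat_tpow n σ A).smul_left _

lemma symProj_mul_tpow_conj_mul_symProj (n : ℕ) (A B C : Matrix (Fin d) (Fin d) ℂ) :
    symProj n d * tpow (A * B * C) n * symProj n d
      = tpow A n * (symProj n d * tpow B n * symProj n d) * tpow C n := by
  simp only [tpow_mul, ← mul_assoc, (commute_symProj_tpow n A).eq]
  simp only [mul_assoc, (commute_symProj_tpow n C).eq]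

end TensorPower

section ConsBlock

variable {α R : Type*} [Fintype α] {m : ℕ}

lemma Fin.sum_univ_fun_succ [AddCommMonoid R] (f : (Fin (m + 1) → α) → R) :
    ∑ a, f a = ∑ i, ∑ s, f (Fin.cons i s) := by
  rw [← (Fin.consEquiv fun _ => α).sum_comp, Fintype.sum_prod_type]
  rfl

def consBlock (M : Matrix (Fin (m + 1) → α) (Fin (m + 1) → α) R) (i j : α) :
    Matrix (Fin m → α) (Fin m → α) R :=
  of fun s t => M (Fin.cons i s) (Fin.cons j t)

lemma consBlock_mul [NonUnitalNonAssocSemiring R]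
    (M N : Matrix (Fin (m + 1) → α) (Fin (m + 1) → α) R) (i j : α) :
    consBlock (M * N) i j = ∑ k, consBlock M i k * consBlock N k j := by
  ext s t
  simp [consBlock, mul_apply, Fin.sum_univ_fun_succ, Matrix.sum_apply]

end ConsBlock

lemma consBlock_tpow {d : ℕ} (A : Matrix (Fin d) (Fin d) ℂ) (n : ℕ) (i j : Fin d) :
    consBlock (tpow A (n + 1)) i j = A i j • tpow A n := by
  ext s t
  simp [consBlock, tpow, Fin.prod_univ_succ]

lemma ptrRest_apply {d m : ℕ} (M : Matrix (Fin (m + 1) → Fin d) (Fin (m + 1) → Fin d) ℂ)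
    (i j : Fin d) : ptrRest M i j = trace (consBlock M i j) := rfl

lemma ptrRest_tpow_mul_mul_tpow {d m : ℕ} {U V : Matrix (Fin d) (Fin d) ℂ} (hVU : V * U = 1)
    (M : Matrix (Fin (m + 1) → Fin d) (Fin (m + 1) → Fin d) ℂ) :
    ptrRest (tpow U (m + 1) * M * tpow V (m + 1)) = U * ptrRest M * V := by
  have trace_conj (B) : trace (tpow U m * B * tpow V m) = trace B := by
    rw [trace_mul_cycle, ← tpow_mul, hVU, tpow_one, one_mul]
  ext i j
  simp only [ptrRest_apply, consBlock_mul, consBlock_tpow, Finset.sum_mul, Matrix.smul_mul,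
    Matrix.mul_smul, trace_sum, trace_smul, trace_conj, mul_apply, smul_eq_mul]
  exact Finset.sum_congr rfl fun _ _ => Finset.sum_congr rfl fun _ _ => by ring

lemma exists_unitary_mulVec_single {𝕜 ι : Type*} [RCLike 𝕜] [Fintype ι] [DecidableEq ι]
    (i₀ : ι) (ψ : ι → 𝕜) (hψ : star ψ ⬝ᵥ ψ = 1) :
    ∃ U : Matrix ι ι 𝕜, Uᴴ * U = 1 ∧ U *ᵥ Pi.single i₀ 1 = ψ := by
  have hψ_orthonormal : Orthonormal 𝕜 (({i₀} : Set ι).domRestrict fun _ => WithLp.toLp 2 ψ) := by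
    rw [orthonormal_iff_ite]
    rintro ⟨i, rfl⟩ ⟨j, rfl⟩
    rw [if_pos rfl, ← hψ]
    simp only [Set.domRestrict, PiLp.inner_apply]
    simp [dotProduct, RCLike.conj_mul]
  obtain ⟨b, hb⟩ := hψ_orthonormal.exists_orthonormalBasis_extension_of_card_eq (by simp)
  refine ⟨(EuclideanSpace.basisFun ι 𝕜).toBasis.toMatrix b,
    (EuclideanSpace.basisFun ι 𝕜).toMatrix_orthonormalBasis_conjTranspose_mul_self b, ?_⟩
  ext i
  simp [Module.Basis.toMatrix_apply, hb i₀ rfl]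

section UnitaryConj

variable {𝕜 ι : Type*} [RCLike 𝕜] [Fintype ι] [DecidableEq ι] {U : Matrix ι ι 𝕜} {i₀ : ι}
  {ψ : ι → 𝕜}

lemma conj_diagonal_eq_smul_vecMulVec_add (hU : Uᴴ * U = 1) (hUψ : U *ᵥ Pi.single i₀ 1 = ψ)
    (a b : 𝕜) :
    U * diagonal (fun i => if i = i₀ then a + b else b) * Uᴴ
      = a • vecMulVec ψ (star ψ) + b • 1 := by
  have hdiag : diagonal (fun i => if i = i₀ then a + b else b)
      = a • vecMulVec (Pi.single i₀ 1) (star (Pi.single i₀ 1)) + b • (1 : Matrix ι ι 𝕜) := by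
    ext i j
    by_cases hi : i = i₀ <;> by_cases hj : j = i₀ <;>
      simp_all [diagonal_apply, one_apply, vecMulVec_apply, Pi.single_apply, eq_comm]
  rw [hdiag, Matrix.mul_add, Matrix.add_mul, Matrix.mul_smul, Matrix.smul_mul, mul_vecMulVec,
    vecMulVec_mul, ← star_mulVec, hUψ, Matrix.mul_smul, Matrix.smul_mul, mul_one,
    mul_eq_one_comm.mp hU]

lemma star_dotProduct_conj_mulVec (hU : Uᴴ * U = 1) (hUψ : U *ᵥ Pi.single i₀ 1 = ψ)
    (X : Matrix ι ι 𝕜) : star ψ ⬝ᵥ (U * X * Uᴴ) *ᵥ ψ = X i₀ i₀ := by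
  rw [← hUψ, star_mulVec, mulVec_mulVec, dotProduct_mulVec, vecMul_vecMul,
    show Uᴴ * (U * X * Uᴴ * U) = Uᴴ * U * X * (Uᴴ * U) by simp only [mul_assoc], hU, one_mul,
    mul_one]
  simp

end UnitaryConj

/-- covariance of the fidelity under depolarizing noise. For
`d ≥ 2`, `n = m+1 ≥ 1`, `δ ∈ [0,1]` and every unit vector `ψ ∈ ℂ^d`, with
`ρ_ψ = (1−δ)|ψ⟩⟨ψ| + (δ/d)I` and `Λ = Diag(λ₀, δ/d, …, δ/d)`, `λ₀ = 1 − (d−1)δ/d`,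
one has `⟨ψ| tr_{2…n}[Π_n ρ_ψ^{⊗n} Π_n] |ψ⟩ = ⟨e₀| tr_{2…n}[Π_n Λ^{⊗n} Π_n] |e₀⟩`. -/
theorem stmt19 (d m : ℕ) (hd : 2 ≤ d) (δ : ℝ)
    (ψ : Fin d → ℂ) (hψ : star ψ ⬝ᵥ ψ = 1) :
    star ψ ⬝ᵥ
      (ptrRest (symProj (m + 1) d *
          tpow (((1 - δ : ℝ) : ℂ) • Matrix.vecMulVec ψ (star ψ)
            + ((δ / d : ℝ) : ℂ) • (1 : Matrix (Fin d) (Fin d) ℂ)) (m + 1) *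
          symProj (m + 1) d) *ᵥ ψ)
      = ptrRest (symProj (m + 1) d *
          tpow (Matrix.diagonal (fun i : Fin d =>
            if i = (⟨0, by omega⟩ : Fin d) then ((1 - ((d : ℝ) - 1) * δ / d : ℝ) : ℂ)
            else ((δ / d : ℝ) : ℂ))) (m + 1) *
          symProj (m + 1) d)
        (⟨0, by omega⟩ : Fin d) (⟨0, by omega⟩ : Fin d) := by
  obtain ⟨U, hU, hUψ⟩ := exists_unitary_mulVec_single (⟨0, by omega⟩ : Fin d) ψ hψ
  have heig₀ : 1 - ((d : ℝ) - 1) * δ / d = (1 - δ) + δ / d := by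
    field_simp
    ring
  simp only [heig₀, Complex.ofReal_add]
  rw [← conj_diagonal_eq_smul_vecMulVec_add hU hUψ, symProj_mul_tpow_conj_mul_symProj,
    ptrRest_tpow_mul_mul_tpow hU, star_dotProduct_conj_mulVec hU hUψ]
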